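/- (Scaling in E_{2,1}^s) Let s < 0 and f ∈ E_{2,1}^s(ℝ^d) with supp f̂ ⊂ {ξ ∈ ℝ_I^d : |ξ|_∞ ≥ 1}. Write f_λ(x) = f(λx). Then there exists C depending only on s and d such that for all λ ≥ 2, ‖f_λ‖_{E_{2,1}^s} ≤ C 2^{s(λ−1)} ‖f‖_{E_{2,1}^s}. -/

import Mathlib

open MeasureTheory FourierTransform ENNReal

noncomputable section

abbrev Vd (d : ℕ) := EuclideanSpace ℝ (Fin d)

def cube (d : ℕ) (k : Fin d → ℤ) : Set (Vd d) :=
  {ξ | ∀ i, (k i : ℝ) ≤ ξ i ∧ ξ i < k i + 1}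

def l1Z {d : ℕ} (k : Fin d → ℤ) : ℝ := ∑ i, |(k i : ℝ)|

/-- The E_{2,1}^s norm: Σ_{k∈ℤ^d} 2^{s|k|} ‖f̂‖_{L²(k+[0,1)^d)}. -/
def E21norm (d : ℕ) (s : ℝ) (f : Vd d → ℂ) : ℝ≥0∞ :=
  ∑' k : Fin d → ℤ, ENNReal.ofReal ((2:ℝ) ^ (s * l1Z k)) *
    eLpNorm (𝓕 f) 2 (volume.restrict (cube d k))

/-!
Since `𝓕 (f (λ ·)) ξ = λ⁻ᵈ 𝓕 f (ξ / λ)`, the `L²` mass of the dilate's transform on the cube `k`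
is `λ^{-d/2}` times the mass of `𝓕 f` on `λ⁻¹ • cube k`. Split that set along the unit cubes `l`.
On the support of `𝓕 f` (nonnegative coordinates, one of them `≥ 1`) the piece indexed by `(k, l)`
is empty unless `|k| ≥ |l| + λ - 2`, so its weight `2^{s|k|}` is at most `2^{s(λ-2)} 2^{s|l|}`.
Each cube `l` meets at most `(λ + 2)^d` of the sets `λ⁻¹ • cube k`, so Cauchy–Schwarz over them
costs `(λ + 2)^{d/2}`, which cancels `λ^{-d/2}` up to the factor `2^{d/2}`.
-/

open Set RealInnerProductSpace

namespace ENNReal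

variable {ι : Type*}

theorem tsum_sq_le_sq_tsum (x : ι → ℝ≥0∞) : ∑' i, x i ^ 2 ≤ (∑' i, x i) ^ 2 := by
  calc ∑' i, x i ^ 2 ≤ ∑' i, x i * ∑' j, x j :=
        ENNReal.tsum_le_tsum fun i => by rw [sq]; gcongr; exact ENNReal.le_tsum i
    _ = (∑' i, x i) ^ 2 := by rw [ENNReal.tsum_mul_right, sq]

theorem rpow_inv_two_sq (x : ℝ≥0∞) : (x ^ (2⁻¹ : ℝ)) ^ 2 = x := by
  rw [← ENNReal.rpow_natCast, ← ENNReal.rpow_mul]; norm_num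

theorem sqrt_tsum_le_tsum_sqrt (a : ι → ℝ≥0∞) :
    (∑' i, a i) ^ (2⁻¹ : ℝ) ≤ ∑' i, a i ^ (2⁻¹ : ℝ) := by
  rw [ENNReal.rpow_inv_le_iff two_pos, ENNReal.rpow_two]
  simpa only [rpow_inv_two_sq] using tsum_sq_le_sq_tsum fun i => a i ^ (2⁻¹ : ℝ)

theorem sum_sqrt_le_sqrt_card_mul_sum (s : Finset ι) (a : ι → ℝ≥0∞) :
    ∑ i ∈ s, a i ^ (2⁻¹ : ℝ) ≤ (s.card * ∑ i ∈ s, a i) ^ (2⁻¹ : ℝ) := by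
  rw [ENNReal.le_rpow_inv_iff two_pos]
  have h := ENNReal.rpow_sum_le_const_mul_sum_rpow s (fun i => a i ^ (2⁻¹ : ℝ)) one_le_two
  simpa only [← ENNReal.rpow_mul, inv_mul_cancel₀ (two_ne_zero' ℝ), ENNReal.rpow_one,
    show (2 : ℝ) - 1 = 1 by norm_num] using h

theorem tsum_mul_le_of_regroup {κ : Type*} (w : ι → ℝ≥0∞) (v : κ → ℝ≥0∞) (a : ι → ℝ≥0∞)
    (b : ι → κ → ℝ≥0∞) (c : κ → ℝ≥0∞) (B D : ℝ≥0∞) (hab : ∀ k, a k ≤ ∑' l, b k l)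
    (hwv : ∀ k l, b k l ≠ 0 → w k ≤ B * v l) (hbc : ∀ l, ∑' k, b k l ≤ D * c l) :
    ∑' k, w k * a k ≤ B * D * ∑' l, v l * c l := by
  have hterm : ∀ k l, w k * b k l ≤ B * (v l * b k l) := fun k l => by
    by_cases h : b k l = 0
    · simp [h]
    · rw [← mul_assoc]; gcongr; exact hwv k l h
  calc ∑' k, w k * a k ≤ ∑' k, ∑' l, w k * b k l := by
        gcongr with k; rw [ENNReal.tsum_mul_left]; gcongr; exact hab k
    _ ≤ ∑' k, ∑' l, B * (v l * b k l) := ENNReal.tsum_le_tsum fun k =>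
        ENNReal.tsum_le_tsum fun l => hterm k l
    _ = B * ∑' l, v l * ∑' k, b k l := by
        rw [ENNReal.tsum_comm, ← ENNReal.tsum_mul_left]
        simp only [ENNReal.tsum_mul_left]
    _ ≤ B * ∑' l, v l * (D * c l) := by gcongr with l; exact hbc l
    _ = B * D * ∑' l, v l * c l := by
        simp_rw [mul_left_comm (v _) D, ENNReal.tsum_mul_left, mul_assoc]

end ENNReal

section FourierDilation

variable {V E : Type*} [NormedAddCommGroup V] [InnerProductSpace ℝ V] [FiniteDimensional ℝ V]
  [MeasurableSpace V] [BorelSpace V] [NormedAddCommGroup E] [NormedSpace ℂ E]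

theorem Real.fourier_comp_smul (f : V → E) {c : ℝ} (hc : c ≠ 0) (ξ : V) :
    𝓕 (fun x => f (c • x)) ξ = |(c ^ Module.finrank ℝ V)⁻¹| • 𝓕 f (c⁻¹ • ξ) := by
  simp only [Real.fourier_eq]
  rw [← Measure.integral_comp_smul volume (fun x => 𝐞 (-⟪x, c⁻¹ • ξ⟫) • f x) c]
  congr 1 with x
  rw [real_inner_smul_left, real_inner_smul_right, ← mul_assoc, mul_inv_cancel₀ hc, one_mul]

theorem MeasureTheory.Measure.lintegral_comp_smul (μ : Measure V) [μ.IsAddHaarMeasure]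
    (g : V → ℝ≥0∞) {c : ℝ} (hc : c ≠ 0) :
    ∫⁻ x, g (c • x) ∂μ = ENNReal.ofReal |(c ^ Module.finrank ℝ V)⁻¹| * ∫⁻ x, g x ∂μ := by
  rw [← smul_eq_mul, ← lintegral_smul_measure, ← Measure.map_addHaar_smul μ hc]
  exact (lintegral_map_equiv g (MeasurableEquiv.smul₀ c hc)).symm

def fourierEnergy (f : V → E) : Measure V :=
  volume.withDensity fun ξ => ‖𝓕 f ξ‖ₑ ^ (2 : ℝ)

theorem eLpNorm_fourier_restrict (f : V → E) (A : Set V) :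
    eLpNorm (𝓕 f) 2 (volume.restrict A) = fourierEnergy f A ^ (2⁻¹ : ℝ) := by
  rw [eLpNorm_eq_lintegral_rpow_enorm_toReal two_ne_zero ofNat_ne_top, fourierEnergy,
    withDensity_apply']
  norm_num

theorem fourierEnergy_comp_smul (f : V → E) {c : ℝ} (hc : c ≠ 0) {A : Set V}
    (hA : MeasurableSet A) :
    fourierEnergy (fun x => f (c • x)) A
      = ENNReal.ofReal |(c ^ Module.finrank ℝ V)⁻¹| * fourierEnergy f ((c • ·) ⁻¹' A) := by
  set a := |(c ^ Module.finrank ℝ V)⁻¹|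
  have ha : 0 < a := by positivity
  set G : V → ℝ≥0∞ := fun ξ => ‖𝓕 f ξ‖ₑ ^ (2 : ℝ)
  have hQ : MeasurableSet ((c • ·) ⁻¹' A : Set V) := hA.preimage (measurable_const_smul c)
  have hdensity : ∀ ξ, ‖𝓕 (fun x => f (c • x)) ξ‖ₑ ^ (2 : ℝ)
      = ENNReal.ofReal a ^ (2 : ℝ) * G (c⁻¹ • ξ) := by
    intro ξ
    rw [Real.fourier_comp_smul f hc, enorm_smul, ENNReal.mul_rpow_of_nonneg _ _ zero_le_two,
      Real.enorm_of_nonneg ha.le]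
  have hindicator : A.indicator (fun ξ => G (c⁻¹ • ξ))
      = fun ξ => ((c • ·) ⁻¹' A).indicator G (c⁻¹ • ξ) := by
    funext ξ
    rw [← Set.indicator_comp_right (c⁻¹ • ·), ← Set.preimage_comp]
    simp only [Function.comp_def, smul_inv_smul₀ hc, Set.preimage_id']
  simp only [fourierEnergy, withDensity_apply _ hA, withDensity_apply _ hQ, hdensity]
  rw [lintegral_const_mul' _ _ (by finiteness), ← lintegral_indicator hA, hindicator,
    Measure.lintegral_comp_smul _ _ (inv_ne_zero hc), lintegral_indicator hQ, ← mul_assoc]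
  congr 1
  rw [ENNReal.ofReal_rpow_of_pos ha, ← ENNReal.ofReal_mul (by positivity), Real.rpow_two,
    inv_pow, inv_inv]
  have : |c ^ Module.finrank ℝ V| ≠ 0 := by positivity
  simp only [a, abs_inv]
  field_simp

theorem exists_fourier_ne_zero_of_fourierEnergy_ne_zero (f : V → E) {A : Set V}
    (hA : MeasurableSet A) (h : fourierEnergy f A ≠ 0) : ∃ ξ ∈ A, 𝓕 f ξ ≠ 0 := by
  contrapose! h
  rw [fourierEnergy, withDensity_apply _ hA]
  exact (setLIntegral_congr_fun hA fun ξ hξ => by simp [h ξ hξ]).trans lintegral_zero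

end FourierDilation

theorem MeasureTheory.measure_eq_tsum_inter_fiber {α β : Type*} [MeasurableSpace α]
    [MeasurableSpace β] [Countable β] [MeasurableSingletonClass β] (μ : Measure α) {φ : α → β}
    (hφ : Measurable φ) {A : Set α} (hA : MeasurableSet A) :
    μ A = ∑' b, μ (A ∩ φ ⁻¹' {b}) := by
  conv_lhs => rw [show A = ⋃ b, A ∩ φ ⁻¹' {b} by ext; simp]
  refine measure_iUnion (fun b b' hbb' => ?_) fun b => hA.inter (hφ (measurableSet_singleton b))
  exact ((disjoint_singleton.2 hbb').preimage φ).mono inter_subset_right inter_subset_right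

theorem Int.floor_add_sub_two_le_floor_mul {x lam : ℝ} (hx : 1 ≤ x) (hlam : 1 ≤ lam) :
    (⌊x⌋ : ℝ) + (lam - 2) ≤ ⌊lam * x⌋ := by
  have h₁ := Int.floor_le x
  have h₂ := Int.sub_one_lt_floor (lam * x)
  nlinarith

section Cubes

variable {d : ℕ}

def cubeIndex (ξ : Vd d) : Fin d → ℤ := fun i => ⌊ξ i⌋

theorem mem_cube_iff {k : Fin d → ℤ} {ξ : Vd d} : ξ ∈ cube d k ↔ cubeIndex ξ = k := by
  simp [cube, cubeIndex, funext_iff, Int.floor_eq_iff]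

theorem measurable_cubeIndex : Measurable (cubeIndex : Vd d → Fin d → ℤ) := by
  unfold cubeIndex; fun_prop

theorem cube_eq_preimage (k : Fin d → ℤ) : cube d k = cubeIndex ⁻¹' {k} := by
  ext ξ; exact mem_cube_iff

theorem measurableSet_cube (k : Fin d → ℤ) : MeasurableSet (cube d k) := by
  rw [cube_eq_preimage]; exact measurable_cubeIndex (measurableSet_singleton k)

theorem l1Z_cubeIndex_add_le {ξ : Vd d} {lam : ℝ} (hξ₀ : ∀ i, 0 ≤ ξ i)
    (hξ₁ : ∃ i, 1 ≤ ξ i) (hlam : 1 ≤ lam) :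
    l1Z (cubeIndex ξ) + (lam - 2) ≤ l1Z (cubeIndex (lam • ξ)) := by
  obtain ⟨i₀, hi₀⟩ := hξ₁
  have hfloor : ∀ i, (0 : ℝ) ≤ ⌊ξ i⌋ ∧ (⌊ξ i⌋ : ℝ) ≤ ⌊lam * ξ i⌋ := fun i => by
    have := Int.floor_nonneg.2 (hξ₀ i)
    have := Int.floor_mono (le_mul_of_one_le_left (hξ₀ i) hlam)
    constructor <;> exact_mod_cast ‹_›
  have hgap : ∀ i, 0 ≤ |(⌊lam * ξ i⌋ : ℝ)| - |(⌊ξ i⌋ : ℝ)| := fun i => by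
    rw [abs_of_nonneg (hfloor i).1, abs_of_nonneg ((hfloor i).1.trans (hfloor i).2)]
    linarith [hfloor i]
  have hi₀gap : lam - 2 ≤ |(⌊lam * ξ i₀⌋ : ℝ)| - |(⌊ξ i₀⌋ : ℝ)| := by
    rw [abs_of_nonneg (hfloor i₀).1, abs_of_nonneg ((hfloor i₀).1.trans (hfloor i₀).2)]
    linarith [Int.floor_add_sub_two_le_floor_mul hi₀ hlam]
  have := Finset.single_le_sum (fun i _ => hgap i) (Finset.mem_univ i₀)
  simp only [l1Z, cubeIndex, PiLp.smul_apply, smul_eq_mul]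
  rw [Finset.sum_sub_distrib] at this
  linarith

theorem exists_finset_cubeIndex_smul_mem {lam : ℝ} (hlam : 0 ≤ lam) (l : Fin d → ℤ) :
    ∃ K : Finset (Fin d → ℤ), (K.card : ℝ) ≤ (lam + 2) ^ d ∧
      ∀ ξ ∈ cube d l, cubeIndex (lam • ξ) ∈ K := by
  refine ⟨Fintype.piFinset fun i => Finset.Icc ⌊lam * l i⌋ (⌊lam * l i⌋ + ⌈lam⌉), ?_, ?_⟩
  · have hcard : ((⌈lam⌉ + 1).toNat : ℝ) ≤ lam + 2 := by
      rw [← Int.cast_natCast, Int.toNat_of_nonneg (by linarith [Int.ceil_nonneg hlam])]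
      push_cast
      linarith [Int.ceil_lt_add_one lam]
    have hfactor : ∀ i, (⌊lam * l i⌋ + ⌈lam⌉ + 1 - ⌊lam * l i⌋).toNat = (⌈lam⌉ + 1).toNat :=
      fun i => by congr 1; ring
    simp only [Fintype.card_piFinset, Int.card_Icc, hfactor, Finset.prod_const, Finset.card_univ,
      Fintype.card_fin]
    push_cast
    gcongr
  · intro ξ hξ
    simp only [Fintype.mem_piFinset, Finset.mem_Icc, cubeIndex, PiLp.smul_apply, smul_eq_mul]
    intro i
    obtain ⟨hlo, hhi⟩ := hξ i
    constructor
    · exact Int.floor_mono (mul_le_mul_of_nonneg_left hlo hlam)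
    · rw [← Int.lt_add_one_iff, Int.floor_lt]
      push_cast
      nlinarith [Int.lt_floor_add_one (lam * l i), Int.le_ceil lam]

variable (μ : Measure (Vd d))

theorem sqrt_measure_le_tsum_sqrt_measure_inter_cube {A : Set (Vd d)} (hA : MeasurableSet A) :
    μ A ^ (2⁻¹ : ℝ) ≤ ∑' l, μ (A ∩ cube d l) ^ (2⁻¹ : ℝ) := by
  rw [measure_eq_tsum_inter_fiber μ measurable_cubeIndex hA]
  simp only [← cube_eq_preimage]
  exact ENNReal.sqrt_tsum_le_tsum_sqrt _

theorem tsum_sqrt_measure_smul_preimage_cube_inter_le {lam : ℝ} (hlam : 0 ≤ lam)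
    (l : Fin d → ℤ) :
    ∑' k, μ ((lam • ·) ⁻¹' cube d k ∩ cube d l) ^ (2⁻¹ : ℝ)
      ≤ ENNReal.ofReal ((lam + 2) ^ d) ^ (2⁻¹ : ℝ) * μ (cube d l) ^ (2⁻¹ : ℝ) := by
  obtain ⟨K, hK, hmem⟩ := exists_finset_cubeIndex_smul_mem hlam l
  have hvanish : ∀ k ∉ K, μ ((lam • ·) ⁻¹' cube d k ∩ cube d l) ^ (2⁻¹ : ℝ) = 0 := by
    intro k hk
    rw [show (lam • ·) ⁻¹' cube d k ∩ cube d l = ∅ from eq_empty_of_forall_notMem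
      fun ξ ⟨hξk, hξl⟩ => hk (mem_cube_iff.1 hξk ▸ hmem ξ hξl)]
    simp
  have hfiber : ∑ k ∈ K, μ ((lam • ·) ⁻¹' cube d k ∩ cube d l) ≤ μ (cube d l) := by
    rw [measure_eq_tsum_inter_fiber μ (measurable_cubeIndex.comp (measurable_const_smul lam))
      (measurableSet_cube l)]
    simp only [inter_comm (cube d l), preimage_comp, ← cube_eq_preimage]
    exact ENNReal.sum_le_tsum K
  rw [tsum_eq_sum hvanish, ← ENNReal.mul_rpow_of_nonneg _ _ (by norm_num)]
  calc ∑ k ∈ K, μ ((lam • ·) ⁻¹' cube d k ∩ cube d l) ^ (2⁻¹ : ℝ)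
      ≤ (K.card * ∑ k ∈ K, μ ((lam • ·) ⁻¹' cube d k ∩ cube d l)) ^ (2⁻¹ : ℝ) :=
        ENNReal.sum_sqrt_le_sqrt_card_mul_sum K _
    _ ≤ (ENNReal.ofReal ((lam + 2) ^ d) * μ (cube d l)) ^ (2⁻¹ : ℝ) := by
        gcongr
        rw [← ENNReal.ofReal_natCast]
        exact ENNReal.ofReal_le_ofReal hK

end Cubes

section Scaling

variable {d : ℕ} {s : ℝ}

theorem E21norm_eq_tsum (g : Vd d → ℂ) :
    E21norm d s g
      = ∑' k, ENNReal.ofReal (2 ^ (s * l1Z k)) * fourierEnergy g (cube d k) ^ (2⁻¹ : ℝ) := by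
  simp only [E21norm, eLpNorm_fourier_restrict]

theorem E21norm_comp_smul (f : Vd d → ℂ) {lam : ℝ} (hlam : lam ≠ 0) :
    E21norm d s (fun x => f (lam • x)) = ENNReal.ofReal |(lam ^ d)⁻¹| ^ (2⁻¹ : ℝ) *
      ∑' k, ENNReal.ofReal (2 ^ (s * l1Z k)) *
        fourierEnergy f ((lam • ·) ⁻¹' cube d k) ^ (2⁻¹ : ℝ) := by
  rw [E21norm_eq_tsum, ← ENNReal.tsum_mul_left]
  refine tsum_congr fun k => ?_
  rw [fourierEnergy_comp_smul f hlam (measurableSet_cube k), finrank_euclideanSpace_fin,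
    ENNReal.mul_rpow_of_nonneg _ _ (by norm_num)]
  ring

theorem weight_le_of_fourierEnergy_smul_preimage_cube_inter_ne_zero (hs : s ≤ 0)
    {f : Vd d → ℂ}
    (hsupp : Function.support (𝓕 f) ⊆ {ξ : Vd d | (∀ i, 0 ≤ ξ i) ∧ ∃ i, 1 ≤ ξ i})
    {lam : ℝ} (hlam : 1 ≤ lam) {k l : Fin d → ℤ}
    (h : fourierEnergy f ((lam • ·) ⁻¹' cube d k ∩ cube d l) ≠ 0) :
    ENNReal.ofReal (2 ^ (s * l1Z k))
      ≤ ENNReal.ofReal (2 ^ (s * (lam - 2))) * ENNReal.ofReal (2 ^ (s * l1Z l)) := by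
  obtain ⟨ξ, ⟨hξk, hξl⟩, hξ⟩ := exists_fourier_ne_zero_of_fourierEnergy_ne_zero f
    (((measurableSet_cube k).preimage (measurable_const_smul lam)).inter (measurableSet_cube l)) h
  obtain ⟨hξ₀, hξ₁⟩ := hsupp hξ
  rw [← mem_cube_iff.1 hξk, ← mem_cube_iff.1 hξl, ← ENNReal.ofReal_mul (by positivity),
    ← Real.rpow_add two_pos]
  refine ENNReal.ofReal_le_ofReal (Real.rpow_le_rpow_of_exponent_le one_le_two ?_)
  nlinarith [l1Z_cubeIndex_add_le hξ₀ hξ₁ hlam]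

theorem scaling_constant_le {lam : ℝ} (hlam : 2 ≤ lam) :
    ENNReal.ofReal |(lam ^ d)⁻¹| ^ (2⁻¹ : ℝ) *
        (ENNReal.ofReal (2 ^ (s * (lam - 2))) * ENNReal.ofReal ((lam + 2) ^ d) ^ (2⁻¹ : ℝ))
      ≤ ENNReal.ofReal ((2 ^ d : ℝ) ^ (2⁻¹ : ℝ) * 2 ^ (-s) * 2 ^ (s * (lam - 1))) := by
  have hlam₀ : 0 < lam := by linarith
  have hratio : |(lam ^ d)⁻¹| * (lam + 2) ^ d ≤ 2 ^ d := by
    rw [abs_inv, abs_of_pos (by positivity), ← div_eq_inv_mul, ← div_pow]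
    gcongr
    rw [div_le_iff₀ hlam₀]
    linarith
  have hexp : (2 : ℝ) ^ (-s) * 2 ^ (s * (lam - 1)) = 2 ^ (s * (lam - 2)) := by
    rw [← Real.rpow_add two_pos]; ring_nf
  rw [ENNReal.ofReal_rpow_of_nonneg (by positivity) (by norm_num),
    ENNReal.ofReal_rpow_of_nonneg (by positivity) (by norm_num),
    ← ENNReal.ofReal_mul (by positivity), ← ENNReal.ofReal_mul (by positivity)]
  refine ENNReal.ofReal_le_ofReal ?_
  calc |(lam ^ d)⁻¹| ^ (2⁻¹ : ℝ) * (2 ^ (s * (lam - 2)) * ((lam + 2) ^ d) ^ (2⁻¹ : ℝ))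
      = (|(lam ^ d)⁻¹| * (lam + 2) ^ d) ^ (2⁻¹ : ℝ) * 2 ^ (s * (lam - 2)) := by
        rw [Real.mul_rpow (by positivity) (by positivity)]; ring
    _ ≤ (2 ^ d : ℝ) ^ (2⁻¹ : ℝ) * 2 ^ (s * (lam - 2)) := by gcongr
    _ = (2 ^ d : ℝ) ^ (2⁻¹ : ℝ) * 2 ^ (-s) * 2 ^ (s * (lam - 1)) := by rw [mul_assoc, hexp]

end Scaling

theorem stmt18_general (d : ℕ) (s : ℝ) (hs : s < 0) :
    ∃ C : ℝ, 0 < C ∧ ∀ f : Vd d → ℂ,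
      Function.support (𝓕 f) ⊆ {ξ : Vd d | (∀ i, 0 ≤ ξ i) ∧ ∃ i, 1 ≤ ξ i} →
      ∀ lam : ℝ, 2 ≤ lam →
        E21norm d s (fun x => f (lam • x)) ≤
          ENNReal.ofReal (C * (2:ℝ) ^ (s * (lam - 1))) * E21norm d s f := by
  refine ⟨(2 ^ d : ℝ) ^ (2⁻¹ : ℝ) * 2 ^ (-s), by positivity, fun f hsupp lam hlam => ?_⟩
  have hlam₀ : 0 < lam := by linarith
  set ν := fourierEnergy f
  have hregroup := ENNReal.tsum_mul_le_of_regroup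
    (fun k => ENNReal.ofReal (2 ^ (s * l1Z k))) (fun l => ENNReal.ofReal (2 ^ (s * l1Z l)))
    (fun k => ν ((lam • ·) ⁻¹' cube d k) ^ (2⁻¹ : ℝ))
    (fun k l => ν ((lam • ·) ⁻¹' cube d k ∩ cube d l) ^ (2⁻¹ : ℝ))
    (fun l => ν (cube d l) ^ (2⁻¹ : ℝ))
    (ENNReal.ofReal (2 ^ (s * (lam - 2)))) (ENNReal.ofReal ((lam + 2) ^ d) ^ (2⁻¹ : ℝ))
    (fun k => sqrt_measure_le_tsum_sqrt_measure_inter_cube ν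
      ((measurableSet_cube k).preimage (measurable_const_smul lam)))
    (fun k l h => weight_le_of_fourierEnergy_smul_preimage_cube_inter_ne_zero hs.le hsupp
      (by linarith) (by simpa using h))
    (fun l => tsum_sqrt_measure_smul_preimage_cube_inter_le ν hlam₀.le l)
  rw [E21norm_comp_smul f hlam₀.ne', E21norm_eq_tsum f]
  calc _ ≤ _ * (_ * ∑' l, ENNReal.ofReal (2 ^ (s * l1Z l)) * ν (cube d l) ^ (2⁻¹ : ℝ)) :=
        mul_le_mul_right hregroup _
    _ ≤ _ := by
        rw [← mul_assoc]
        exact mul_le_mul_left (scaling_constant_le hlam) _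

/-- scaling in E_{2,1}^s. For s < 0 there is C = C(s,d) such that
for all f with supp f̂ ⊂ {ξ ∈ ℝ_I^d : |ξ|_∞ ≥ 1} and all λ ≥ 2,
‖f(λ·)‖_{E_{2,1}^s} ≤ C 2^{s(λ−1)} ‖f‖_{E_{2,1}^s}. -/
theorem stmt18 (d : ℕ) (hd : 1 ≤ d) (s : ℝ) (hs : s < 0) :
    ∃ C : ℝ, 0 < C ∧ ∀ f : Vd d → ℂ,
      Function.support (𝓕 f) ⊆ {ξ : Vd d | (∀ i, 0 ≤ ξ i) ∧ ∃ i, 1 ≤ ξ i} →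
      ∀ lam : ℝ, 2 ≤ lam →
        E21norm d s (fun x => f (lam • x)) ≤
          ENNReal.ofReal (C * (2:ℝ) ^ (s * (lam - 1))) * E21norm d s f :=
  stmt18_general d s hs
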